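/- arXiv:1604.00130 — 2 statements merged into one kernel-verified Lean document; each statement's English description precedes it below -/
import Mathlib

section
/- Let X and Y be G-spaces and f : X → X, h : Y → Y be pseudoequivariant and G-minimal. Then f × h is (G × G)-minimal if and only if for all g, k ∈ G, x ∈ X, y ∈ Y, both (g • f(x), y) and (x, k • h(y)) belong to the closure of (G × G)_{f × h}(x, y). -/
open Pointwise

/-- `f` is pseudoequivariant: `f(G • x) = G • f(x)` for every `x ∈ X`. -/
def Pseudoequivariant {G X : Type*} [Group G] [MulAction G X] (f : X → X) : Prop :=
  ∀ x : X, f '' (MulAction.orbit G x) = MulAction.orbit G (f x)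

/-- The `G_f`-orbit of `x`: the set `{g • f^[k] x : g ∈ G, k ≥ 0}`. -/
def GfOrbit {G X : Type*} [Group G] [MulAction G X] (f : X → X) (x : X) : Set X :=
  {y | ∃ (g : G) (k : ℕ), g • f^[k] x = y}

/-- `f` is `G`-minimal if every `G_f`-orbit is dense in `X`. -/
def GMinimal {G X : Type*} [Group G] [MulAction G X] [TopologicalSpace X]
    (f : X → X) : Prop :=
  ∀ x : X, closure (GfOrbit (G := G) f x) = Set.univ

/-- The `(G × G)_{f × h}`-orbit of `(x, y)`:
the set `{(g • f^[k] x, g' • h^[k] y) : g, g' ∈ G, k ≥ 0}`. -/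
def ProdGfOrbit {G X Y : Type*} [Group G] [MulAction G X] [MulAction G Y]
    (f : X → X) (h : Y → Y) (p : X × Y) : Set (X × Y) :=
  {q | ∃ (g g' : G) (k : ℕ), q = (g • f^[k] p.1, g' • h^[k] p.2)}

/-!
The closure `C` of a `(G × G)_{f × h}`-orbit contains the orbits of its own points:
pseudoequivariance of the iterates lets `f^[k] (g • x)` be rewritten as `g' • f^[k] x`, so
orbits of orbit points stay inside the orbit, and continuity extends this to the closure. The
hypothesis then makes `C` invariant under `f × id`, `id × h` and `G × G`, and applying
`G`-minimality of `f` and then of `h` to the slices of `C` fills `X × Y`.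
-/

open Set Function MulAction

namespace Pseudoequivariant

variable {G X : Type*} [Group G] [MulAction G X] {f f' : X → X}

theorem comp (hf : Pseudoequivariant (G := G) f) (hf' : Pseudoequivariant (G := G) f') :
    Pseudoequivariant (G := G) (f ∘ f') := fun x => by
  rw [image_comp, hf' x, hf (f' x), comp_apply]

theorem iterate (hf : Pseudoequivariant (G := G) f) (n : ℕ) :
    Pseudoequivariant (G := G) f^[n] := by
  induction n with
  | zero => intro x; simp
  | succ n ih => rw [iterate_succ]; exact ih.comp hf

theorem apply_smul_mem_orbit (hf : Pseudoequivariant (G := G) f) (g : G) (x : X) :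
    f (g • x) ∈ orbit G (f x) :=
  hf x ▸ mem_image_of_mem f (mem_orbit x g)

end Pseudoequivariant

theorem GMinimal.eq_univ_of_isClosed {G X : Type*} [Group G] [MulAction G X]
    [TopologicalSpace X] {f : X → X} (hmin : GMinimal (G := G) f) {S : Set X}
    (hS : IsClosed S) {x : X} (hx : x ∈ S) (hfS : MapsTo f S S)
    (hGS : ∀ g : G, MapsTo (g • ·) S S) : S = univ := by
  refine eq_univ_of_univ_subset (hmin x ▸ closure_minimal ?_ hS)
  rintro _ ⟨g, k, rfl⟩
  exact hGS g (hfS.iterate k hx)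

section ProdGfOrbit

variable {G X Y : Type*} [Group G] [MulAction G X] [MulAction G Y] {f : X → X} {h : Y → Y}

theorem mem_prodGfOrbit_self (p : X × Y) : p ∈ ProdGfOrbit (G := G) f h p :=
  ⟨1, 1, 0, by simp⟩

theorem prodGfOrbit_subset_of_mem (hpef : Pseudoequivariant (G := G) f)
    (hpeh : Pseudoequivariant (G := G) h) {p q : X × Y} (hq : q ∈ ProdGfOrbit (G := G) f h p) :
    ProdGfOrbit (G := G) f h q ⊆ ProdGfOrbit (G := G) f h p := by
  obtain ⟨g, g', m, rfl⟩ := hq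
  rintro _ ⟨a, a', k, rfl⟩
  obtain ⟨b, hb⟩ := (hpef.iterate k).apply_smul_mem_orbit g (f^[m] p.1)
  obtain ⟨b', hb'⟩ := (hpeh.iterate k).apply_smul_mem_orbit g' (h^[m] p.2)
  refine ⟨a * b, a' * b', k + m, ?_⟩
  simp only [← hb, ← hb', mul_smul, iterate_add_apply]

variable [TopologicalSpace X] [TopologicalSpace Y] [ContinuousConstSMul G X]
  [ContinuousConstSMul G Y]

theorem closure_prodGfOrbit_subset_of_mem_closure (hf : Continuous f) (hh : Continuous h)
    (hpef : Pseudoequivariant (G := G) f) (hpeh : Pseudoequivariant (G := G) h)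
    {p q : X × Y} (hq : q ∈ closure (ProdGfOrbit (G := G) f h p)) :
    closure (ProdGfOrbit (G := G) f h q) ⊆ closure (ProdGfOrbit (G := G) f h p) := by
  refine closure_minimal ?_ isClosed_closure
  rintro _ ⟨g, g', k, rfl⟩
  have hF : Continuous fun r : X × Y => (g • f^[k] r.1, g' • h^[k] r.2) := by fun_prop
  exact MapsTo.closure (fun r hr => prodGfOrbit_subset_of_mem hpef hpeh hr ⟨g, g', k, rfl⟩)
    hF hq

end ProdGfOrbit

theorem GMinimal.prod_eq_univ {G X Y : Type*} [Group G] [MulAction G X] [MulAction G Y]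
    [TopologicalSpace X] [TopologicalSpace Y] {f : X → X} {h : Y → Y}
    (hminf : GMinimal (G := G) f) (hminh : GMinimal (G := G) h) {C : Set (X × Y)}
    (hC : IsClosed C) {p : X × Y} (hp : p ∈ C)
    (hGC : ∀ (g g' : G), ∀ q ∈ C, (g • q.1, g' • q.2) ∈ C)
    (hfC : ∀ q ∈ C, (f q.1, q.2) ∈ C) (hhC : ∀ q ∈ C, (q.1, h q.2) ∈ C) : C = univ := by
  have hrow : {a | (a, p.2) ∈ C} = univ :=
    hminf.eq_univ_of_isClosed (hC.preimage (by fun_prop)) hp (fun _ ha => hfC _ ha)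
      fun g _ ha => by simpa using hGC g 1 _ ha
  refine eq_univ_of_forall fun q => ?_
  have hcol : {b | (q.1, b) ∈ C} = univ :=
    hminh.eq_univ_of_isClosed (hC.preimage (by fun_prop)) (hrow ▸ mem_univ q.1 :)
      (fun _ hb => hhC _ hb) fun g _ hb => by simpa using hGC 1 g _ hb
  exact (hcol ▸ mem_univ q.2 :)

theorem prodGMinimal_iff_general {G X Y : Type*} [Group G] [TopologicalSpace G]
    [TopologicalSpace X] [MulAction G X] [ContinuousSMul G X]
    [TopologicalSpace Y] [MulAction G Y] [ContinuousSMul G Y]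
    (f : X → X) (h : Y → Y) (hf : Continuous f) (hh : Continuous h)
    (hpef : Pseudoequivariant (G := G) f) (hpeh : Pseudoequivariant (G := G) h)
    (hminf : GMinimal (G := G) f) (hminh : GMinimal (G := G) h) :
    (∀ p : X × Y, closure (ProdGfOrbit (G := G) f h p) = Set.univ) ↔
      (∀ (g k : G) (x : X) (y : Y),
        (g • f x, y) ∈ closure (ProdGfOrbit (G := G) f h (x, y)) ∧
        (x, k • h y) ∈ closure (ProdGfOrbit (G := G) f h (x, y))) := by
  refine ⟨fun H g k x y => by simp [H (x, y)], fun H p => ?_⟩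
  have hsub : ∀ q ∈ closure (ProdGfOrbit (G := G) f h p),
      closure (ProdGfOrbit (G := G) f h q) ⊆ closure (ProdGfOrbit (G := G) f h p) :=
    fun _ hq => closure_prodGfOrbit_subset_of_mem_closure hf hh hpef hpeh hq
  refine hminf.prod_eq_univ hminh isClosed_closure (subset_closure (mem_prodGfOrbit_self p))
    (fun g g' q hq => hsub q hq (subset_closure ⟨g, g', 0, rfl⟩))
    (fun q hq => hsub q hq (by simpa using (H 1 1 q.1 q.2).1))
    (fun q hq => hsub q hq (by simpa using (H 1 1 q.1 q.2).2))

/-- Let `X`, `Y` be `G`-spaces and `f : X → X`, `h : Y → Y` be pseudoequivariant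
`G`-minimal maps. Then `f × h` is `(G × G)`-minimal iff for all `g, k ∈ G`, `x ∈ X`,
`y ∈ Y`, both `(g • f x, y)` and `(x, k • h y)` lie in the closure of the
`(G × G)_{f × h}`-orbit of `(x, y)`. -/
theorem prodGMinimal_iff {G X Y : Type*} [Group G] [TopologicalSpace G]
    [IsTopologicalGroup G] [TopologicalSpace X] [MulAction G X] [ContinuousSMul G X]
    [TopologicalSpace Y] [MulAction G Y] [ContinuousSMul G Y]
    (f : X → X) (h : Y → Y) (hf : Continuous f) (hh : Continuous h)
    (hpef : Pseudoequivariant (G := G) f) (hpeh : Pseudoequivariant (G := G) h)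
    (hminf : GMinimal (G := G) f) (hminh : GMinimal (G := G) h) :
    (∀ p : X × Y, closure (ProdGfOrbit (G := G) f h p) = Set.univ) ↔
      (∀ (g k : G) (x : X) (y : Y),
        (g • f x, y) ∈ closure (ProdGfOrbit (G := G) f h (x, y)) ∧
        (x, k • h y) ∈ closure (ProdGfOrbit (G := G) f h (x, y))) :=
  prodGMinimal_iff_general f h hf hh hpef hpeh hminf hminh
end

section
/- Let X be a G-space and f : X → X be pseudoequivariant. If x ∈ X is a G_f-periodic point of f with G_f-prime period k (i.e. k ≥ 1 is the smallest positive integer such that g • f^k(x) = x for some g ∈ G), then G_f(x) = ⋃_{m=0}^{k-1} G • f^m(x). -/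
open Pointwise

open MulAction

/- If `g • f^[k] x = x`, then `f^[k] x` lies in the orbit of `x`, and pseudoequivariance of the
iterates carries this to `f^[n + k] x ∈ G • f^[n] x`. Hence the orbit of `f^[n] x` only depends on
`n mod k`, so the `G_f`-orbit is already covered by the orbits of `x, f x, …, f^[k - 1] x`. -/

section

variable {G X : Type*} [Group G] [MulAction G X] {f : X → X}

theorem Pseudoequivariant.iterate_s18 (hf : Pseudoequivariant (G := G) f) (n : ℕ) :
    Pseudoequivariant (G := G) f^[n] := by
  induction n with
  | zero => intro x; simp
  | succ n ih =>
    intro x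
    rw [Function.iterate_succ, Set.image_comp, hf, ih, Function.comp_apply]

theorem gfOrbit_eq_iUnion_orbit (f : X → X) (x : X) :
    GfOrbit (G := G) f x = ⋃ n, orbit G (f^[n] x) := by
  ext y
  simp [GfOrbit, mem_orbit_iff, exists_comm (α := G)]

theorem Pseudoequivariant.orbit_iterate_add_of_mem_orbit (hf : Pseudoequivariant (G := G) f)
    {x : X} {k : ℕ} (hx : x ∈ orbit G (f^[k] x)) (n : ℕ) :
    orbit G (f^[n + k] x) = orbit G (f^[n] x) := by
  rw [orbit_eq_iff, Function.iterate_add_apply, ← hf.iterate_s18 n]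
  exact Set.mem_image_of_mem _ (mem_orbit_symm.mp hx)

theorem Pseudoequivariant.orbit_iterate_mod_of_mem_orbit (hf : Pseudoequivariant (G := G) f)
    {x : X} {k : ℕ} (hx : x ∈ orbit G (f^[k] x)) (n : ℕ) :
    orbit G (f^[n] x) = orbit G (f^[n % k] x) := by
  suffices ∀ m q, orbit G (f^[m + k * q] x) = orbit G (f^[m] x) by
    rw [← this (n % k) (n / k), Nat.mod_add_div]
  intro m q
  induction q with
  | zero => simp
  | succ q ih => rw [Nat.mul_succ, ← add_assoc, hf.orbit_iterate_add_of_mem_orbit hx, ih]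

end

theorem gfOrbit_of_periodic_general {G X : Type*} [Group G] [MulAction G X]
    (f : X → X) (hpe : Pseudoequivariant (G := G) f)
    (x : X) (k : ℕ) (hk : 1 ≤ k) (hper : ∃ g : G, g • f^[k] x = x) :
    GfOrbit (G := G) f x = ⋃ m < k, MulAction.orbit G (f^[m] x) := by
  have hx : x ∈ orbit G (f^[k] x) := hper
  rw [gfOrbit_eq_iUnion_orbit]
  refine subset_antisymm (Set.iUnion_subset fun n => ?_) (Set.iUnion₂_subset fun m _ => ?_)
  · rw [hpe.orbit_iterate_mod_of_mem_orbit hx n]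
    exact Set.subset_iUnion₂_of_subset (n % k) (Nat.mod_lt n hk) subset_rfl
  · exact Set.subset_iUnion (fun n => orbit G (f^[n] x)) m

/-- Let `X` be a `G`-space and `f : X → X` be pseudoequivariant. If `x ∈ X` is a
`G_f`-periodic point of `f` with `G_f`-prime period `k` (that is, `k ≥ 1` is the
smallest positive integer such that `g • f^[k] x = x` for some `g ∈ G`), then
`G_f(x) = ⋃_{m = 0}^{k - 1} G • f^[m] x`. -/
theorem gfOrbit_of_periodic {G X : Type*} [Group G] [TopologicalSpace G]
    [IsTopologicalGroup G] [TopologicalSpace X] [MulAction G X] [ContinuousSMul G X]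
    (f : X → X) (hf : Continuous f) (hpe : Pseudoequivariant (G := G) f)
    (x : X) (k : ℕ) (hk : 1 ≤ k) (hper : ∃ g : G, g • f^[k] x = x)
    (hmin : ∀ j : ℕ, 1 ≤ j → j < k → ¬ ∃ g : G, g • f^[j] x = x) :
    GfOrbit (G := G) f x = ⋃ m < k, MulAction.orbit G (f^[m] x) :=
  gfOrbit_of_periodic_general f hpe x k hk hper
end
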